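/- There exists a constant C > 0 such that for every u₂ ∈ C¹[0,1] with u₂(0) = 0, ∫₀¹ ρ^{-2} | (d/dρ)[ V₁(ρ) ∫₀^ρ s u₂(s) ds ] |² dρ ≤ C ∫₀¹ |u₂'(ρ)|² dρ, where V₁(ρ) := −16/(1+ρ²)². -/

import Mathlib

open MeasureTheory

/-- One-sided derivative on `[0,1]`. -/
noncomputable def dI (f : ℝ → ℂ) (ρ : ℝ) : ℂ := derivWithin f (Set.Icc 0 1) ρ

/-- The potential `V₁(ρ) = −16/(1+ρ²)²`. -/
noncomputable def V₁ (ρ : ℝ) : ℝ := -16 / (1 + ρ ^ 2) ^ 2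

/-!
Writing `F(ρ) = ∫₀^ρ s u₂(s) ds`, the derivative is `V₁' F + V₁ ρ u₂`. Since `u₂(0) = 0`, the
fundamental theorem of calculus bounds `|u₂|` by `M = ∫₀¹ |u₂'|`, hence `|F(ρ)| ≤ ρ² M / 2`;
with `|V₁| ≤ 16` and `|V₁'(ρ)| ≤ 64 ρ` this gives `|(V₁ F)'(ρ)| ≤ 48 ρ M`. The weight `ρ⁻²` is
thus absorbed, the integrand is bounded by `48² M²`, and `M² ≤ ∫₀¹ |u₂'|²` by Jensen.
-/

open Set

lemma sq_setIntegral_le_setIntegral_sq {α : Type*} [MeasurableSpace α] {μ : Measure α}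
    {s : Set α} (hs : μ.real s = 1) {f : α → ℝ} (hf : IntegrableOn f s μ)
    (hf2 : IntegrableOn (fun x => f x ^ 2) s μ) :
    (∫ x in s, f x ∂μ) ^ 2 ≤ ∫ x in s, f x ^ 2 ∂μ := by
  have hs0 : μ s ≠ 0 := fun h => by simp [Measure.real, h] at hs
  have hsfin : μ s ≠ ⊤ := fun h => by simp [Measure.real, h] at hs
  have := (even_two.convexOn_pow (𝕜 := ℝ)).map_set_average_le (continuous_pow 2).continuousOn
    isClosed_univ hs0 hsfin (Filter.Eventually.of_forall fun _ => mem_univ _) hf hf2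
  simpa [setAverage_eq, hs] using this

lemma norm_sub_le_setIntegral_norm_derivWithin {E : Type*} [NormedAddCommGroup E]
    [NormedSpace ℝ E] [CompleteSpace E] {f : ℝ → E} {a b x : ℝ} (hab : a < b)
    (hf : ContDiffOn ℝ 1 f (Icc a b)) (hx : x ∈ Icc a b) :
    ‖f x - f a‖ ≤ ∫ t in Ioo a b, ‖derivWithin f (Icc a b) t‖ := by
  have hf' : ContinuousOn (derivWithin f (Icc a b)) (Icc a b) :=
    hf.continuousOn_derivWithin (uniqueDiffOn_Icc hab) le_rfl
  have hsub : Icc a x ⊆ Icc a b := Icc_subset_Icc le_rfl hx.2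
  have hftc : ∫ t in a..x, derivWithin f (Icc a b) t = f x - f a := by
    refine intervalIntegral.integral_eq_sub_of_hasDerivAt_of_le hx.1 (hf.continuousOn.mono hsub)
      (fun t ht => ?_) ((hf'.mono hsub).intervalIntegrable_of_Icc hx.1)
    have ht' : t ∈ Ioo a b := ⟨ht.1, ht.2.trans_le hx.2⟩
    exact (hf.differentiableOn one_ne_zero t (Ioo_subset_Icc_self ht')).hasDerivWithinAt
      |>.hasDerivAt (Icc_mem_nhds ht'.1 ht'.2)
  rw [← hftc]
  calc ‖∫ t in a..x, derivWithin f (Icc a b) t‖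
      ≤ ∫ t in a..x, ‖derivWithin f (Icc a b) t‖ :=
        intervalIntegral.norm_integral_le_integral_norm hx.1
    _ = ∫ t in Ioo a x, ‖derivWithin f (Icc a b) t‖ := by
        rw [intervalIntegral.integral_of_le hx.1, integral_Ioc_eq_integral_Ioo]
    _ ≤ ∫ t in Ioo a b, ‖derivWithin f (Icc a b) t‖ :=
        setIntegral_mono_set ((hf'.norm.integrableOn_Icc).mono_set Ioo_subset_Icc_self)
          (Filter.Eventually.of_forall fun _ => norm_nonneg _)
          (Ioo_subset_Ioo le_rfl hx.2).eventuallyLE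

lemma hasDerivAt_intervalIntegral_of_continuousOn {E : Type*} [NormedAddCommGroup E]
    [NormedSpace ℝ E] [CompleteSpace E] {g : ℝ → E} {a b x : ℝ} (hg : ContinuousOn g (Icc a b))
    (hx : x ∈ Ioo a b) : HasDerivAt (fun y => ∫ t in a..y, g t) (g x) x :=
  intervalIntegral.integral_hasDerivAt_right
    ((hg.mono (Icc_subset_Icc le_rfl hx.2.le)).intervalIntegrable_of_Icc hx.1.le)
    ((hg.mono Ioo_subset_Icc_self).stronglyMeasurableAtFilter isOpen_Ioo x hx)
    (hg.continuousAt (Icc_mem_nhds hx.1 hx.2))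

lemma norm_integral_ofReal_mul_le {u : ℝ → ℂ} {ρ M : ℝ} (hρ : 0 ≤ ρ) (hM : 0 ≤ M)
    (hu : ∀ s ∈ Icc 0 ρ, ‖u s‖ ≤ M) :
    ‖∫ s in (0:ℝ)..ρ, (s : ℂ) * u s‖ ≤ ρ ^ 2 / 2 * M := by
  have hbound : ∀ᵐ s : ℝ ∂volume.restrict (uIoc 0 ρ), ‖(s : ℂ) * u s‖ ≤ s * M := by
    rw [uIoc_of_le hρ]
    refine (ae_restrict_iff' measurableSet_Ioc).2 (Filter.Eventually.of_forall fun s hs => ?_)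
    rw [norm_mul, Complex.norm_real, Real.norm_of_nonneg hs.1.le]
    exact mul_le_mul_of_nonneg_left (hu s (Ioc_subset_Icc_self hs)) hs.1.le
  have hint : ∫ s in (0:ℝ)..ρ, s * M = ρ ^ 2 / 2 * M := by
    rw [intervalIntegral.integral_mul_const, integral_id]
    ring
  calc ‖∫ s in (0:ℝ)..ρ, (s : ℂ) * u s‖ ≤ |∫ s in (0:ℝ)..ρ, s * M| :=
        intervalIntegral.norm_integral_le_abs_of_norm_le hbound
          ((continuous_id.mul continuous_const).intervalIntegrable 0 ρ)
    _ = ρ ^ 2 / 2 * M := by rw [hint, abs_of_nonneg (by positivity)]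

lemma hasDerivAt_V₁ (ρ : ℝ) : HasDerivAt V₁ (64 * ρ / (1 + ρ ^ 2) ^ 3) ρ := by
  have hpos : (1 + ρ ^ 2) ^ 2 ≠ 0 := by positivity
  refine ((hasDerivAt_const ρ (-16 : ℝ)).fun_div
    (((hasDerivAt_pow 2 ρ).const_add 1).fun_pow 2) hpos).congr_deriv ?_
  field_simp
  norm_num
  ring

lemma abs_V₁_le (ρ : ℝ) : |V₁ ρ| ≤ 16 := by
  have h : 1 ≤ (1 + ρ ^ 2) ^ 2 := one_le_pow₀ (by nlinarith [sq_nonneg ρ])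
  rw [V₁, abs_div, abs_neg, abs_of_pos (by positivity : (0:ℝ) < (1 + ρ ^ 2) ^ 2)]
  norm_num
  exact div_le_self (by norm_num) h

lemma abs_deriv_V₁_le {ρ : ℝ} (hρ : 0 ≤ ρ) : |deriv V₁ ρ| ≤ 64 * ρ := by
  rw [(hasDerivAt_V₁ ρ).deriv]
  have h : 1 ≤ (1 + ρ ^ 2) ^ 3 := one_le_pow₀ (by nlinarith [sq_nonneg ρ])
  rw [abs_of_nonneg (by positivity)]
  exact div_le_self (by positivity) h

lemma norm_deriv_V₁_mul_integral_le {u : ℝ → ℂ} {M ρ : ℝ} (hu : ContinuousOn u (Icc 0 1))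
    (hM : ∀ s ∈ Icc (0:ℝ) 1, ‖u s‖ ≤ M) (hρ : ρ ∈ Ioo (0:ℝ) 1) :
    ‖deriv (fun x : ℝ => ((V₁ x : ℝ) : ℂ) * ∫ s in (0:ℝ)..x, (s : ℂ) * u s) ρ‖ ≤ 48 * ρ * M := by
  have hM0 : 0 ≤ M := (norm_nonneg _).trans (hM 0 ⟨le_rfl, zero_le_one⟩)
  have hF := hasDerivAt_intervalIntegral_of_continuousOn (g := fun s : ℝ => (s : ℂ) * u s)
    (Complex.continuous_ofReal.continuousOn.mul hu) hρ
  rw [((hasDerivAt_V₁ ρ).differentiableAt.hasDerivAt.ofReal_comp.fun_mul hF).deriv]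
  have hFbound : ‖∫ s in (0:ℝ)..ρ, (s : ℂ) * u s‖ ≤ ρ ^ 2 / 2 * M :=
    norm_integral_ofReal_mul_le hρ.1.le hM0 fun s hs => hM s ⟨hs.1, hs.2.trans hρ.2.le⟩
  have hρ2 : ρ ^ 2 ≤ ρ := by nlinarith [hρ.1, hρ.2]
  calc _ ≤ |deriv V₁ ρ| * ‖∫ s in (0:ℝ)..ρ, (s : ℂ) * u s‖
          + |V₁ ρ| * (ρ * ‖u ρ‖) := by
        refine (norm_add_le _ _).trans_eq ?_
        simp only [norm_mul, Complex.norm_real, Real.norm_eq_abs, abs_of_pos hρ.1]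
    _ ≤ 64 * ρ * (ρ ^ 2 / 2 * M) + 16 * (ρ * M) :=
        add_le_add
          (mul_le_mul (abs_deriv_V₁_le hρ.1.le) hFbound (norm_nonneg _) (by linarith [hρ.1]))
          (mul_le_mul (abs_V₁_le ρ)
            (mul_le_mul_of_nonneg_left (hM ρ (Ioo_subset_Icc_self hρ)) hρ.1.le)
            (mul_nonneg hρ.1.le (norm_nonneg _)) (by norm_num))
    _ ≤ 48 * ρ * M := by nlinarith [mul_le_mul_of_nonneg_left hρ2 (mul_nonneg hρ.1.le hM0)]

theorem stmt_8 :
    ∃ C : ℝ, 0 < C ∧ ∀ u₂ : ℝ → ℂ, ContDiffOn ℝ 1 u₂ (Set.Icc 0 1) → u₂ 0 = 0 →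
      IntegrableOn
        (fun ρ : ℝ =>
          ‖deriv (fun x : ℝ => ((V₁ x : ℝ) : ℂ) * ∫ s in (0:ℝ)..x, (s:ℂ) * u₂ s) ρ‖ ^ 2
            / ρ ^ 2) (Set.Ioo 0 1) ∧
      (∫ ρ in Set.Ioo (0:ℝ) 1,
          ‖deriv (fun x : ℝ => ((V₁ x : ℝ) : ℂ) * ∫ s in (0:ℝ)..x, (s:ℂ) * u₂ s) ρ‖ ^ 2
            / ρ ^ 2)
        ≤ C * ∫ ρ in Set.Ioo (0:ℝ) 1, ‖dI u₂ ρ‖ ^ 2 := by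
  refine ⟨48 ^ 2, by norm_num, fun u hu hu0 => ?_⟩
  set M := ∫ ρ in Ioo (0:ℝ) 1, ‖dI u ρ‖
  have hdI : ContinuousOn (dI u) (Icc 0 1) :=
    hu.continuousOn_derivWithin (uniqueDiffOn_Icc one_pos) le_rfl
  have hM2 : M ^ 2 ≤ ∫ ρ in Ioo (0:ℝ) 1, ‖dI u ρ‖ ^ 2 :=
    sq_setIntegral_le_setIntegral_sq (by simp)
      ((hdI.norm.integrableOn_Icc).mono_set Ioo_subset_Icc_self)
      (((hdI.norm.pow 2).integrableOn_Icc).mono_set Ioo_subset_Icc_self)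
  have hu_le : ∀ s ∈ Icc (0:ℝ) 1, ‖u s‖ ≤ M := fun s hs => by
    simpa [hu0, M, dI] using norm_sub_le_setIntegral_norm_derivWithin one_pos hu hs
  set φ := fun ρ : ℝ =>
    ‖deriv (fun x : ℝ => ((V₁ x : ℝ) : ℂ) * ∫ s in (0:ℝ)..x, (s:ℂ) * u s) ρ‖ ^ 2 / ρ ^ 2
  have hφ : ∀ ρ ∈ Ioo (0:ℝ) 1, ‖φ ρ‖ ≤ 48 ^ 2 * M ^ 2 := fun ρ hρ => by
    have h := norm_deriv_V₁_mul_integral_le hu.continuousOn hu_le hρ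
    rw [Real.norm_of_nonneg (by positivity), div_le_iff₀ (pow_pos hρ.1 2)]
    nlinarith [pow_le_pow_left₀ (norm_nonneg _) h 2]
  have hφ_meas : AEStronglyMeasurable φ volume :=
    (((measurable_deriv _).norm.pow_const 2).div (measurable_id.pow_const 2)).aestronglyMeasurable
  refine ⟨Measure.integrableOn_of_bounded (by simp) hφ_meas
    ((ae_restrict_iff' measurableSet_Ioo).2 (Filter.Eventually.of_forall hφ)), ?_⟩
  calc ∫ ρ in Ioo (0:ℝ) 1, φ ρ ≤ ‖∫ ρ in Ioo (0:ℝ) 1, φ ρ‖ := Real.le_norm_self _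
    _ ≤ 48 ^ 2 * M ^ 2 * volume.real (Ioo (0:ℝ) 1) :=
        norm_setIntegral_le_of_norm_le_const (by simp) hφ
    _ ≤ 48 ^ 2 * ∫ ρ in Ioo (0:ℝ) 1, ‖dI u ρ‖ ^ 2 := by
        rw [show volume.real (Ioo (0:ℝ) 1) = 1 by simp, mul_one]
        gcongr
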